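/- Let F be a field, N = a + b with a, b ≥ 0, and α = (n_1,…,n_k; r) with n_1+⋯+n_k+r = N. For T ∈ 𝒯^{P_α}_{a,b} given by the integers a_1,…,a_k, r_1, b_1,…,b_k, r_2, the following two identities of subgroups of Sp_N(F) hold: (1) σ̃_T P_α σ̃_T⁻¹ ∩ H_{a,b} = j(P_{(a_1,…,a_k; r_1)} × P_{(b_1,…,b_k; r_2)}), and (2) σ̃_T M_α σ̃_T⁻¹ ∩ H_{a,b} = j(M_{(a_1,…,a_k; r_1)} × M_{(b_1,…,b_k; r_2)}), where P_{(a_1,…,a_k; r_1)} and M_{(a_1,…,a_k; r_1)} are the standard parabolic and Levi subgroups of Sp_a(F) for the tuple (a_1,…,a_k; r_1) (entries equal to 0 being ignored), and similarly in Sp_b(F). -/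

import Mathlib

open scoped MatrixGroups Matrix

namespace Stmt6

variable (F : Type*) [Field F]

/-- Extension of a tuple `n : Fin k → ℕ` by zero to all of `ℕ`. -/
def nExt {k : ℕ} (n : Fin k → ℕ) : ℕ → ℕ := fun i => if h : i < k then n ⟨i, h⟩ else 0

/-- Partial sums `ν_j = n 0 + ⋯ + n (j-1)`. -/
def psum {k : ℕ} (n : Fin k → ℕ) (j : ℕ) : ℕ := ∑ i ∈ Finset.range j, nExt n i

/-- Block index of a position `x` with respect to the composition `c` with `K` parts. -/
def blkIdxF (c : ℕ → ℕ) (K : ℕ) (x : ℕ) : ℕ :=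
  ((Finset.range K).filter (fun j => (∑ i ∈ Finset.range (j + 1), c i) ≤ x)).card

/-- The symplectic form `J_N = [[0, w_N], [-w_N, 0]]`, `w_N` the antidiagonal matrix. -/
def Jmat (N : ℕ) : Matrix (Fin (2 * N)) (Fin (2 * N)) F :=
  fun i j => if (i : ℕ) + (j : ℕ) = 2 * N - 1 then (if (i : ℕ) < N then 1 else -1) else 0

/-- The symplectic group `Sp_N(F) = { g ∈ GL_{2N}(F) : ᵗg J_N g = J_N }` (as a set). -/
def SpSet (N : ℕ) : Set (GL (Fin (2 * N)) F) :=
  { g | (g.val)ᵀ * Jmat F N * g.val = Jmat F N }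

/-- The composition `(n_1, …, n_k, 2r, n_k, …, n_1)` of `2N` underlying the standard
parabolic subgroup of `Sp_N` attached to `(n_1, …, n_k; r)`. -/
def cSp {k : ℕ} (n : Fin k → ℕ) (r : ℕ) : ℕ → ℕ :=
  fun i => if i < k then nExt n i else if i = k then 2 * r else nExt n (2 * k - i)

/-- The standard parabolic subgroup `P_{(n_1,…,n_k;r)}` of `Sp_N` (as a set): block upper
triangular symplectic matrices with diagonal blocks `n_1, …, n_k, 2r, n_k, …, n_1`. -/
def PparSp (N : ℕ) {k : ℕ} (n : Fin k → ℕ) (r : ℕ) : Set (GL (Fin (2 * N)) F) :=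
  { g | g ∈ SpSet F N ∧ ∀ i j : Fin (2 * N),
      blkIdxF (cSp n r) (2 * k + 1) (j : ℕ) < blkIdxF (cSp n r) (2 * k + 1) (i : ℕ) →
        g.val i j = 0 }

/-- The standard Levi subgroup `M_{(n_1,…,n_k;r)}` of `Sp_N` (as a set). -/
def MparSp (N : ℕ) {k : ℕ} (n : Fin k → ℕ) (r : ℕ) : Set (GL (Fin (2 * N)) F) :=
  { g | g ∈ SpSet F N ∧ ∀ i j : Fin (2 * N),
      blkIdxF (cSp n r) (2 * k + 1) (j : ℕ) ≠ blkIdxF (cSp n r) (2 * k + 1) (i : ℕ) →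
        g.val i j = 0 }

/-- The doubled permutation `σ̃` of `[0, 2N)` attached to `σ ∈ S_N`:
`i ↦ σ i` and `2N - 1 - i ↦ 2N - 1 - σ i` for `i < N`. -/
def dPerm (N : ℕ) (σ : Equiv.Perm (Fin N)) : Equiv.Perm (Fin (2 * N)) :=
  (Equiv.permCongr (finSumFinEquiv.trans (finCongr (two_mul N).symm)))
    (Equiv.sumCongr σ (Fin.revPerm.trans (σ.trans Fin.revPerm)))

/-- The matrix `j(h₁, h₂)`: for `h₁ = [[A, B], [C, D]]` of size `2a × 2a` (blocks of size
`a × a`) and `h₂` of size `2b × 2b`, the `2(a+b) × 2(a+b)` matrix with `A, B, C, D` in the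
four corner `a × a` blocks and `h₂` in the central `2b × 2b` block. -/
def jEmbed (a b : ℕ) (h1 : Matrix (Fin (2 * a)) (Fin (2 * a)) F)
    (h2 : Matrix (Fin (2 * b)) (Fin (2 * b)) F) :
    Matrix (Fin (2 * (a + b))) (Fin (2 * (a + b))) F := fun x y =>
  if hx : (x : ℕ) < a then
    if hy : (y : ℕ) < a then h1 ⟨(x : ℕ), by omega⟩ ⟨(y : ℕ), by omega⟩
    else if hy2 : a + 2 * b ≤ (y : ℕ) then
      h1 ⟨(x : ℕ), by omega⟩ ⟨(y : ℕ) - 2 * b, by have := y.isLt; omega⟩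
    else 0
  else if hx2 : a + 2 * b ≤ (x : ℕ) then
    if hy : (y : ℕ) < a then
      h1 ⟨(x : ℕ) - 2 * b, by have := x.isLt; omega⟩ ⟨(y : ℕ), by omega⟩
    else if hy2 : a + 2 * b ≤ (y : ℕ) then
      h1 ⟨(x : ℕ) - 2 * b, by have := x.isLt; omega⟩ ⟨(y : ℕ) - 2 * b, by have := y.isLt; omega⟩
    else 0
  else
    if hy : a ≤ (y : ℕ) ∧ (y : ℕ) < a + 2 * b then
      h2 ⟨(x : ℕ) - a, by omega⟩ ⟨(y : ℕ) - a, by omega⟩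
    else 0

/-- Upper triangular invertible matrices. -/
def UTSet (M : ℕ) : Set (GL (Fin M) F) :=
  { g | ∀ i j : Fin M, (j : ℕ) < (i : ℕ) → g.val i j = 0 }

/-- The subgroup `H_{a,b} = j(Sp_a × Sp_b)` of `Sp_{a+b}` (as a set). -/
def HSet (a b : ℕ) : Set (GL (Fin (2 * (a + b))) F) :=
  { g | ∃ h1 : GL (Fin (2 * a)) F, h1 ∈ SpSet F a ∧
        ∃ h2 : GL (Fin (2 * b)) F, h2 ∈ SpSet F b ∧ g.val = jEmbed F a b h1.val h2.val }

/-- The subgroup `P₀^H = j(B_a × B_b)`, `B_c` the upper triangular subgroup of `Sp_c`. -/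
def P0HSp (a b : ℕ) : Set (GL (Fin (2 * (a + b))) F) :=
  { g | ∃ h1 : GL (Fin (2 * a)) F, h1 ∈ SpSet F a ∩ UTSet F (2 * a) ∧
        ∃ h2 : GL (Fin (2 * b)) F, h2 ∈ SpSet F b ∩ UTSet F (2 * b) ∧
          g.val = jEmbed F a b h1.val h2.val }

/-- A monomial matrix: exactly one nonzero entry in each row and in each column. -/
def IsMonomial {M : ℕ} (A : Matrix (Fin M) (Fin M) F) : Prop :=
  (∀ i, ∃! j, A i j ≠ 0) ∧ (∀ j, ∃! i, A i j ≠ 0)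

/-- Conjugation `g S g⁻¹` of a set by a group element. -/
def conjSet {M : ℕ} (g : GL (Fin M) F) (S : Set (GL (Fin M) F)) : Set (GL (Fin M) F) :=
  (fun h => g * h * g⁻¹) '' S

/-- Conjugation `σ S σ⁻¹` by the permutation matrix of `σ`. -/
def conjPerm {M : ℕ} (σ : Equiv.Perm (Fin M)) (S : Set (GL (Fin M) F)) :
    Set (GL (Fin M) F) :=
  { g | ∃ p ∈ S, g.val = (p.val).submatrix σ.symm σ.symm }

def blkPair {k : ℕ} (aT bT : Fin k → ℕ) (x : ℕ) : ℕ :=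
  ((Finset.range k).filter (fun j => psum aT (j + 1) + psum bT (j + 1) ≤ x)).card

def isBTab {k : ℕ} (aT bT : Fin k → ℕ) (x : ℕ) : Bool :=
  decide (psum aT (blkPair aT bT x + 1) + psum bT (blkPair aT bT x) ≤ x)

/-- The permutation `σ_T` attached to a table `T = (aT, bT)` (GL recipe). -/
noncomputable def sigmaTab (N : ℕ) {k : ℕ} (aT bT : Fin k → ℕ) : Equiv.Perm (Fin N) :=
  (Tuple.sort (fun x : Fin N => isBTab aT bT (x : ℕ)))⁻¹

/-!
Conjugating by `σ̃_T` and intersecting with `H_{a,b}` can be computed entrywise: membership in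
`P_α` or `M_α` is a condition on the block numbers of the nonzero entries, `σ̃_T` preserves `J_N`,
and after reindexing `j(h₁, h₂)` is block diagonal. Everything thus comes down to block numbers:
an index `x` of `Sp_a` (resp. `Sp_b`), sent into `[0, 2N)` by `j` and then by `σ̃_T⁻¹`, lies in the
block of `(n_1, …, n_k, 2r, n_k, …, n_1)` with the same number as the block of
`(a_1, …, a_k, 2r_1, a_k, …, a_1)` (resp. of the `b_i`) containing `x`. On the lower half this
holds because `σ_T⁻¹` interleaves the blocks as `A₁ B₁ A₂ B₂ …`; the upper half follows by the
symmetry `x ↦ 2N - 1 - x`, which commutes with `σ̃_T` and with `j` and reverses the order of the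
blocks.
-/

open Finset

section Compositions


variable (c : ℕ → ℕ)

lemma sum_range_le_sum_range {j j' : ℕ} (h : j ≤ j') :
    ∑ i ∈ range j, c i ≤ ∑ i ∈ range j', c i :=
  sum_le_sum_of_subset (range_subset_range.2 h)

lemma blkIdxF_eq_of_le_of_lt {K t x : ℕ} (ht : t ≤ K)
    (h1 : ∑ i ∈ range t, c i ≤ x) (h2 : x < ∑ i ∈ range (t + 1), c i) :
    blkIdxF c K x = t := by
  rw [blkIdxF, ← card_range t]
  congr 1
  ext j
  simp only [mem_filter, mem_range]
  constructor
  · rintro ⟨-, hj⟩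
    by_contra! hjt
    have := sum_range_le_sum_range c (show t + 1 ≤ j + 1 by omega)
    omega
  · intro hjt
    have := sum_range_le_sum_range c (show j + 1 ≤ t from hjt)
    omega

lemma blkIdxF_spec {K x : ℕ} (hx : x < ∑ i ∈ range K, c i) :
    blkIdxF c K x < K ∧ ∑ i ∈ range (blkIdxF c K x), c i ≤ x ∧
      x < ∑ i ∈ range (blkIdxF c K x + 1), c i := by
  obtain ⟨t, htK, h1, h2⟩ :
      ∃ t < K, ∑ i ∈ range t, c i ≤ x ∧ x < ∑ i ∈ range (t + 1), c i := by
    induction K with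
    | zero => simp at hx
    | succ K ih =>
      by_cases h : x < ∑ i ∈ range K, c i
      · obtain ⟨t, ht, h'⟩ := ih h
        exact ⟨t, by omega, h'⟩
      · exact ⟨K, K.lt_succ_self, not_lt.1 h, hx⟩
  rw [blkIdxF_eq_of_le_of_lt c htK.le h1 h2]
  exact ⟨htK, h1, h2⟩

lemma blkIdxF_mono (K : ℕ) : Monotone (blkIdxF c K) := fun _ _ hxy =>
  card_le_card fun j hj => by
    simp only [mem_filter] at hj ⊢
    exact ⟨hj.1, hj.2.trans hxy⟩

lemma sum_range_add_sum_range_sub_of_symm {L j : ℕ} (hc : ∀ i < L, c (L - 1 - i) = c i)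
    (hj : j ≤ L) : ∑ i ∈ range j, c i + ∑ i ∈ range (L - j), c i = ∑ i ∈ range L, c i := by
  conv_rhs => rw [← Nat.add_sub_cancel' hj, sum_range_add]
  congr 1
  rw [← sum_range_reflect]
  refine sum_congr rfl fun i hi => ?_
  rw [mem_range] at hi
  rw [← hc (j + i) (by omega)]
  congr 1
  omega

lemma blkIdxF_reflect {L x : ℕ} (hc : ∀ i < L, c (L - 1 - i) = c i)
    (hx : x < ∑ i ∈ range L, c i) :
    blkIdxF c L (∑ i ∈ range L, c i - 1 - x) = L - 1 - blkIdxF c L x := by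
  obtain ⟨ht, h1, h2⟩ := blkIdxF_spec c hx
  set t := blkIdxF c L x
  have e1 := sum_range_add_sum_range_sub_of_symm c hc (show t ≤ L by omega)
  have e2 := sum_range_add_sum_range_sub_of_symm c hc (show t + 1 ≤ L by omega)
  rw [show L - (t + 1) = L - 1 - t by omega] at e2
  apply blkIdxF_eq_of_le_of_lt c (by omega)
  · omega
  · rw [show L - 1 - t + 1 = L - t by omega]
    omega

end Compositions

section PartialSums


lemma psum_mono {K : ℕ} (c : Fin K → ℕ) : Monotone (psum c) := fun _ _ h =>
  sum_range_le_sum_range _ h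

lemma psum_total {K : ℕ} (c : Fin K → ℕ) : psum c K = ∑ i, c i := by
  rw [psum, ← Fin.sum_univ_eq_sum_range]
  exact sum_congr rfl fun i _ => by simp [nExt]

lemma psum_succ_last {k : ℕ} (m : Fin (k + 1) → ℕ) :
    psum m (k + 1) = psum m k + m (Fin.last k) := by
  rw [psum, sum_range_succ]
  simp [nExt, psum, Fin.last]

lemma psum_add {K : ℕ} (aT bT : Fin K → ℕ) (j : ℕ) :
    psum (aT + bT) j = psum aT j + psum bT j := by
  rw [psum, psum, psum, ← sum_add_distrib]
  refine sum_congr rfl fun i _ => ?_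
  simp only [nExt, Pi.add_apply]
  split_ifs <;> rfl

end PartialSums

section SymplecticComposition


variable {k : ℕ} (m : Fin (k + 1) → ℕ)

def cSpTab : ℕ → ℕ := cSp (fun i : Fin k => m i.castSucc) (m (Fin.last k))

lemma cSpTab_symm : ∀ i < 2 * k + 1, cSpTab m (2 * k + 1 - 1 - i) = cSpTab m i := by
  intro i hi
  simp only [cSpTab, cSp]
  split_ifs <;> first | rfl | omega | (congr 1; omega)

lemma sum_range_cSpTab_of_le {j : ℕ} (hj : j ≤ k) : ∑ i ∈ range j, cSpTab m i = psum m j :=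
  sum_congr rfl fun i hi => by
    rw [mem_range] at hi
    simp [cSpTab, cSp, nExt, show i < k by omega, show i < k + 1 by omega]

lemma sum_range_cSpTab_succ :
    ∑ i ∈ range (k + 1), cSpTab m i = psum m k + 2 * m (Fin.last k) := by
  rw [sum_range_succ, sum_range_cSpTab_of_le m le_rfl]
  simp [cSpTab, cSp]

lemma sum_range_cSpTab_total : ∑ i ∈ range (2 * k + 1), cSpTab m i = 2 * psum m (k + 1) := by
  have h := sum_range_add_sum_range_sub_of_symm (cSpTab m) (cSpTab_symm m)
    (show k ≤ 2 * k + 1 by omega)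
  rw [show 2 * k + 1 - k = k + 1 by omega, sum_range_cSpTab_succ, sum_range_cSpTab_of_le m le_rfl]
    at h
  rw [← h, psum_succ_last]
  ring

lemma blkIdxF_cSpTab_of_lt {x : ℕ} (hx : x < psum m (k + 1)) :
    blkIdxF (cSpTab m) (2 * k + 1) x = blkIdxF (nExt m) (k + 1) x := by
  obtain ⟨ht, h1, h2⟩ := blkIdxF_spec (nExt m) hx
  set t := blkIdxF (nExt m) (k + 1) x
  apply blkIdxF_eq_of_le_of_lt _ (by omega)
  · rwa [sum_range_cSpTab_of_le m (by omega)]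
  · rcases Nat.lt_or_ge t k with htk | htk
    · rwa [sum_range_cSpTab_of_le m htk]
    · have htk' : t = k := by omega
      change x < psum m (t + 1) at h2
      rw [htk', sum_range_cSpTab_succ]
      rw [htk', psum_succ_last] at h2
      omega

lemma blkIdxF_cSpTab_rev {N : ℕ} (hN : psum m (k + 1) = N) (y : Fin (2 * N)) :
    blkIdxF (cSpTab m) (2 * k + 1) y.rev = 2 * k - blkIdxF (cSpTab m) (2 * k + 1) y := by
  have h := blkIdxF_reflect (cSpTab m) (cSpTab_symm m)
    (show (y : ℕ) < ∑ i ∈ range (2 * k + 1), cSpTab m i by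
      rw [sum_range_cSpTab_total, hN]; exact y.isLt)
  rw [sum_range_cSpTab_total, hN, Nat.add_sub_cancel] at h
  rw [Fin.val_rev, ← h]
  congr 1
  omega

end SymplecticComposition

lemma blkIdxF_cSpTab_map {k M N : ℕ} {m m' : Fin (k + 1) → ℕ} (hm : psum m (k + 1) = N)
    (hm' : psum m' (k + 1) = M) (φ : Fin (2 * M) → Fin (2 * N))
    (hrev : ∀ i, φ i.rev = (φ i).rev) (hlow : ∀ i : Fin (2 * M), (i : ℕ) < M → (φ i : ℕ) < N)
    (h : ∀ i : Fin (2 * M), (i : ℕ) < M →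
      blkIdxF (nExt m) (k + 1) (φ i) = blkIdxF (nExt m') (k + 1) i)
    (i : Fin (2 * M)) :
    blkIdxF (cSpTab m) (2 * k + 1) (φ i) = blkIdxF (cSpTab m') (2 * k + 1) i := by
  have lower : ∀ i : Fin (2 * M), (i : ℕ) < M →
      blkIdxF (cSpTab m) (2 * k + 1) (φ i) = blkIdxF (cSpTab m') (2 * k + 1) i := fun i hi => by
    rw [blkIdxF_cSpTab_of_lt m (hm ▸ hlow i hi), blkIdxF_cSpTab_of_lt m' (hm' ▸ hi), h i hi]
  by_cases hi : (i : ℕ) < M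
  · exact lower i hi
  · have hr : (i.rev : ℕ) < M := by rw [Fin.val_rev]; omega
    rw [← Fin.rev_rev i, hrev, blkIdxF_cSpTab_rev m hm, blkIdxF_cSpTab_rev m' hm', lower _ hr]

section DoubledPermutation

variable {N : ℕ} (σ : Equiv.Perm (Fin N))

def halvesEquiv (N : ℕ) : Fin N ⊕ Fin N ≃ Fin (2 * N) :=
  finSumFinEquiv.trans (finCongr (two_mul N).symm)

@[simp]
lemma halvesEquiv_inl_val (i : Fin N) : (halvesEquiv N (.inl i) : ℕ) = i := by
  simp [halvesEquiv]

lemma halvesEquiv_inr (j : Fin N) :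
    halvesEquiv N (.inr j) = (halvesEquiv N (.inl j.rev)).rev := by
  ext; simp [halvesEquiv]; omega

lemma dPerm_halvesEquiv_inl (i : Fin N) :
    dPerm N σ (halvesEquiv N (.inl i)) = halvesEquiv N (.inl (σ i)) := by
  simp [dPerm, halvesEquiv, Equiv.permCongr_apply]

lemma dPerm_halvesEquiv_inr (j : Fin N) :
    dPerm N σ (halvesEquiv N (.inr j)) = halvesEquiv N (.inr (σ j.rev).rev) := by
  simp only [dPerm, halvesEquiv, Equiv.permCongr_apply, Equiv.symm_apply_apply]
  simp

lemma dPerm_rev_halvesEquiv_inl (i : Fin N) :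
    dPerm N σ (halvesEquiv N (.inl i)).rev = (dPerm N σ (halvesEquiv N (.inl i))).rev := by
  rw [← Fin.rev_rev i, ← halvesEquiv_inr, dPerm_halvesEquiv_inr, halvesEquiv_inr, Fin.rev_rev,
    Fin.rev_rev, dPerm_halvesEquiv_inl]

lemma dPerm_rev (x : Fin (2 * N)) : dPerm N σ x.rev = (dPerm N σ x).rev := by
  obtain ⟨i | j, rfl⟩ := (halvesEquiv N).surjective x
  · exact dPerm_rev_halvesEquiv_inl σ i
  · rw [halvesEquiv_inr, dPerm_rev_halvesEquiv_inl, Fin.rev_rev, Fin.rev_rev]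

lemma dPerm_val_of_lt (x : Fin (2 * N)) (hx : (x : ℕ) < N) :
    (dPerm N σ x : ℕ) = σ ⟨x, hx⟩ := by
  have hx' : halvesEquiv N (.inl ⟨x, hx⟩) = x := Fin.ext (by simp)
  conv_lhs => rw [← hx', dPerm_halvesEquiv_inl, halvesEquiv_inl_val]

lemma dPerm_lt_iff (x : Fin (2 * N)) : (dPerm N σ x : ℕ) < N ↔ (x : ℕ) < N := by
  obtain ⟨i | j, rfl⟩ := (halvesEquiv N).surjective x
  · simp [dPerm_halvesEquiv_inl]
  · rw [halvesEquiv_inr, dPerm_rev, dPerm_halvesEquiv_inl, Fin.val_rev, Fin.val_rev]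
    simp only [halvesEquiv_inl_val]
    omega

lemma dPerm_symm : (dPerm N σ).symm = dPerm N σ⁻¹ := by
  ext x : 1
  rw [Equiv.symm_apply_eq]
  obtain ⟨i | j, rfl⟩ := (halvesEquiv N).surjective x
  · simp [dPerm_halvesEquiv_inl]
  · simp [dPerm_halvesEquiv_inr]

end DoubledPermutation

lemma Jmat_apply {N : ℕ} (u v : Fin (2 * N)) :
    Jmat F N u v = if v = u.rev then (if (u : ℕ) < N then 1 else -1) else 0 := by
  have h : (u : ℕ) + v = 2 * N - 1 ↔ v = u.rev := by rw [Fin.ext_iff, Fin.val_rev]; omega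
  simp only [Jmat, h]

lemma Jmat_apply_map {M N : ℕ} (φ : Fin (2 * M) → Fin (2 * N)) (hinj : Function.Injective φ)
    (hrev : ∀ i, φ i.rev = (φ i).rev) (hlt : ∀ i, (φ i : ℕ) < N ↔ (i : ℕ) < M)
    (u v : Fin (2 * M)) : Jmat F N (φ u) (φ v) = Jmat F M u v := by
  simp only [Jmat_apply, ← hrev, hinj.eq_iff, hlt]

section BlockEmbedding

variable (a b : ℕ)

def iotaA (i : Fin (2 * a)) : Fin (2 * (a + b)) :=
  ⟨if (i : ℕ) < a then i else i + 2 * b, by have := i.isLt; split_ifs <;> omega⟩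

def iotaB (i : Fin (2 * b)) : Fin (2 * (a + b)) :=
  ⟨a + i, by have := i.isLt; omega⟩

lemma iotaA_val (i : Fin (2 * a)) :
    (iotaA a b i : ℕ) = if (i : ℕ) < a then (i : ℕ) else i + 2 * b := rfl

lemma iotaB_val (i : Fin (2 * b)) : (iotaB a b i : ℕ) = a + i := rfl

lemma iotaA_injective : Function.Injective (iotaA a b) := fun i j h => by
  have := congrArg Fin.val h
  simp only [iotaA_val] at this
  ext
  split_ifs at this <;> omega

lemma iotaB_injective : Function.Injective (iotaB a b) := fun i j h => by
  have := congrArg Fin.val h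
  simp only [iotaB_val] at this
  ext
  omega

lemma iotaA_ne_iotaB (i : Fin (2 * a)) (j : Fin (2 * b)) : iotaA a b i ≠ iotaB a b j := by
  intro h
  have := congrArg Fin.val h
  simp only [iotaA_val, iotaB_val] at this
  split_ifs at this <;> omega

lemma iota_bijective : Function.Bijective (Sum.elim (iotaA a b) (iotaB a b)) := by
  rw [Fintype.bijective_iff_injective_and_card]
  refine ⟨(iotaA_injective a b).sumElim (iotaB_injective a b) (iotaA_ne_iotaB a b), ?_⟩
  simp only [Fintype.card_sum, Fintype.card_fin]
  ring

lemma iotaA_rev (i : Fin (2 * a)) : iotaA a b i.rev = (iotaA a b i).rev := by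
  ext
  simp only [iotaA_val, Fin.val_rev]
  split_ifs <;> omega

lemma iotaB_rev (i : Fin (2 * b)) : iotaB a b i.rev = (iotaB a b i).rev := by
  ext
  simp only [iotaB_val, Fin.val_rev]
  omega

lemma iotaA_lt_iff (i : Fin (2 * a)) : (iotaA a b i : ℕ) < a + b ↔ (i : ℕ) < a := by
  rw [iotaA_val]
  split_ifs <;> omega

lemma iotaB_lt_iff (i : Fin (2 * b)) : (iotaB a b i : ℕ) < a + b ↔ (i : ℕ) < b := by
  rw [iotaB_val]
  omega

variable (M1 : Matrix (Fin (2 * a)) (Fin (2 * a)) F) (M2 : Matrix (Fin (2 * b)) (Fin (2 * b)) F)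

lemma jEmbed_iotaA_iotaA (i j : Fin (2 * a)) :
    jEmbed F a b M1 M2 (iotaA a b i) (iotaA a b j) = M1 i j := by
  simp only [jEmbed, iotaA]
  split_ifs <;> first | omega | (congr 1 <;> apply Fin.ext <;> simp only [] <;> omega)

lemma jEmbed_iotaA_iotaB (i : Fin (2 * a)) (j : Fin (2 * b)) :
    jEmbed F a b M1 M2 (iotaA a b i) (iotaB a b j) = 0 := by
  simp only [jEmbed, iotaA, iotaB]
  split_ifs <;> first | rfl | omega

lemma jEmbed_iotaB_iotaA (i : Fin (2 * b)) (j : Fin (2 * a)) :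
    jEmbed F a b M1 M2 (iotaB a b i) (iotaA a b j) = 0 := by
  have hi := iotaB_val a b i
  have hj : (iotaA a b j : ℕ) < a ∨ a + 2 * b ≤ (iotaA a b j : ℕ) := by
    rw [iotaA_val]; split_ifs <;> omega
  simp only [jEmbed]
  split_ifs <;> first | rfl | omega

lemma jEmbed_iotaB_iotaB (i j : Fin (2 * b)) :
    jEmbed F a b M1 M2 (iotaB a b i) (iotaB a b j) = M2 i j := by
  have hi := iotaB_val a b i
  have hj := iotaB_val a b j
  simp only [jEmbed]
  split_ifs <;> first | omega | (congr 1 <;> apply Fin.ext <;> simp only [] <;> omega)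

noncomputable def iotaEquiv : Fin (2 * a) ⊕ Fin (2 * b) ≃ Fin (2 * (a + b)) :=
  Equiv.ofBijective _ (iota_bijective a b)

lemma submatrix_iotaEquiv_jEmbed :
    (jEmbed F a b M1 M2).submatrix (iotaEquiv a b) (iotaEquiv a b) =
      Matrix.fromBlocks M1 0 0 M2 := by
  ext (i | i) (j | j) <;>
    simp [iotaEquiv, jEmbed_iotaA_iotaA, jEmbed_iotaA_iotaB, jEmbed_iotaB_iotaA,
      jEmbed_iotaB_iotaB]

lemma submatrix_iotaEquiv_Jmat :
    (Jmat F (a + b)).submatrix (iotaEquiv a b) (iotaEquiv a b) =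
      Matrix.fromBlocks (Jmat F a) 0 0 (Jmat F b) := by
  ext (i | i) (j | j) <;> simp only [iotaEquiv, Matrix.submatrix_apply, Equiv.ofBijective_apply,
    Sum.elim_inl, Sum.elim_inr, Matrix.fromBlocks_apply₁₁, Matrix.fromBlocks_apply₁₂,
    Matrix.fromBlocks_apply₂₁, Matrix.fromBlocks_apply₂₂, Matrix.zero_apply]
  · exact Jmat_apply_map F _ (iotaA_injective a b) (iotaA_rev a b) (iotaA_lt_iff a b) i j
  · rw [Jmat_apply, if_neg (by rw [← iotaA_rev]; exact (iotaA_ne_iotaB a b _ _).symm)]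
  · rw [Jmat_apply, if_neg (by rw [← iotaB_rev]; exact iotaA_ne_iotaB a b _ _)]
  · exact Jmat_apply_map F _ (iotaB_injective a b) (iotaB_rev a b) (iotaB_lt_iff a b) i j

lemma jEmbed_transpose_mul_Jmat_mul_self (hM1 : M1ᵀ * Jmat F a * M1 = Jmat F a)
    (hM2 : M2ᵀ * Jmat F b * M2 = Jmat F b) :
    (jEmbed F a b M1 M2)ᵀ * Jmat F (a + b) * jEmbed F a b M1 M2 = Jmat F (a + b) := by
  apply (Matrix.reindex (iotaEquiv a b).symm (iotaEquiv a b).symm).injective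
  simp only [Matrix.reindex_apply, Equiv.symm_symm]
  rw [← Matrix.submatrix_mul_equiv _ _ _ (iotaEquiv a b),
    ← Matrix.submatrix_mul_equiv _ _ _ (iotaEquiv a b), ← Matrix.transpose_submatrix,
    submatrix_iotaEquiv_jEmbed, submatrix_iotaEquiv_Jmat]
  simp [Matrix.fromBlocks_transpose, Matrix.fromBlocks_multiply, hM1, hM2]

end BlockEmbedding

lemma submatrix_dPerm_Jmat {N : ℕ} (σ : Equiv.Perm (Fin N)) :
    (Jmat F N).submatrix (dPerm N σ) (dPerm N σ) = Jmat F N := by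
  ext u v
  exact Jmat_apply_map F _ (dPerm N σ).injective (dPerm_rev σ) (dPerm_lt_iff σ) u v

def submatrixUnit {M : ℕ} (π : Equiv.Perm (Fin M)) (g : GL (Fin M) F) : GL (Fin M) F where
  val := g.val.submatrix π π
  inv := g⁻¹.val.submatrix π π
  val_inv := by rw [Matrix.submatrix_mul_equiv, g.mul_inv, Matrix.submatrix_one_equiv]
  inv_val := by rw [Matrix.submatrix_mul_equiv, g.inv_mul, Matrix.submatrix_one_equiv]

lemma submatrixUnit_dPerm_mem_SpSet {N : ℕ} (σ : Equiv.Perm (Fin N)) {g : GL (Fin (2 * N)) F}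
    (hg : g ∈ SpSet F N) : submatrixUnit F (dPerm N σ) g ∈ SpSet F N := by
  change (g.val.submatrix _ _)ᵀ * Jmat F N * g.val.submatrix _ _ = Jmat F N
  have hg' : g.valᵀ * Jmat F N * g.val = Jmat F N := hg
  rw [Matrix.transpose_submatrix]
  conv_lhs => rw [← submatrix_dPerm_Jmat F σ]
  rw [Matrix.submatrix_mul_equiv, Matrix.submatrix_mul_equiv, hg', submatrix_dPerm_Jmat]

/-- `PparSp` and `MparSp` are the cases `R = (· < ·)` and `R = (· ≠ ·)`. -/
def spZeroPattern (N : ℕ) (c : ℕ → ℕ) (K : ℕ) (R : ℕ → ℕ → Prop) :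
    Set (GL (Fin (2 * N)) F) :=
  { g | g ∈ SpSet F N ∧ ∀ i j : Fin (2 * N), R (blkIdxF c K j) (blkIdxF c K i) → g.val i j = 0 }

lemma conjPerm_dPerm_spZeroPattern_inter_HSet {a b K : ℕ} (σ : Equiv.Perm (Fin (a + b)))
    {cN cA cB : ℕ → ℕ} (R : ℕ → ℕ → Prop)
    (hA : ∀ i, blkIdxF cN K ((dPerm (a + b) σ).symm (iotaA a b i)) = blkIdxF cA K i)
    (hB : ∀ i, blkIdxF cN K ((dPerm (a + b) σ).symm (iotaB a b i)) = blkIdxF cB K i) :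
    conjPerm F (dPerm (a + b) σ) (spZeroPattern F (a + b) cN K R) ∩ HSet F a b =
      { g | ∃ h1 : GL (Fin (2 * a)) F, h1 ∈ spZeroPattern F a cA K R ∧
          ∃ h2 : GL (Fin (2 * b)) F, h2 ∈ spZeroPattern F b cB K R ∧
            g.val = jEmbed F a b h1.val h2.val } := by
  set π := dPerm (a + b) σ
  ext g
  simp only [Set.mem_inter_iff, Set.mem_ofPred_eq, conjPerm, HSet, spZeroPattern]
  constructor
  · rintro ⟨⟨p, ⟨-, hp⟩, hgp⟩, h1, h1Sp, h2, h2Sp, hg⟩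
    refine ⟨h1, ⟨h1Sp, fun i j hR => ?_⟩, h2, ⟨h2Sp, fun i j hR => ?_⟩, hg⟩
    · rw [← jEmbed_iotaA_iotaA F a b h1.val h2.val, ← hg, hgp, Matrix.submatrix_apply]
      exact hp _ _ (by rwa [hA, hA])
    · rw [← jEmbed_iotaB_iotaB F a b h1.val h2.val, ← hg, hgp, Matrix.submatrix_apply]
      exact hp _ _ (by rwa [hB, hB])
  · rintro ⟨h1, ⟨h1Sp, hR1⟩, h2, ⟨h2Sp, hR2⟩, hg⟩
    have hgSp : g ∈ SpSet F (a + b) := by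
      rw [SpSet, Set.mem_ofPred_eq, hg]
      exact jEmbed_transpose_mul_Jmat_mul_self F a b _ _ h1Sp h2Sp
    refine ⟨⟨_, ⟨submatrixUnit_dPerm_mem_SpSet F σ hgSp, fun u v hR => ?_⟩, ?_⟩,
      h1, h1Sp, h2, h2Sp, hg⟩
    · change g.val (π u) (π v) = 0
      obtain ⟨i | i, hi⟩ := (iota_bijective a b).surjective (π u) <;>
        obtain ⟨j | j, hj⟩ := (iota_bijective a b).surjective (π v) <;>
        simp only [Sum.elim_inl, Sum.elim_inr] at hi hj <;>
        rw [← hi, ← hj, hg]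
      · rw [jEmbed_iotaA_iotaA]
        apply hR1
        rwa [← hA, ← hA, hi, hj, Equiv.symm_apply_apply, Equiv.symm_apply_apply]
      · exact jEmbed_iotaA_iotaB F a b _ _ i j
      · exact jEmbed_iotaB_iotaA F a b _ _ i j
      · rw [jEmbed_iotaB_iotaB]
        apply hR2
        rwa [← hB, ← hB, hi, hj, Equiv.symm_apply_apply, Equiv.symm_apply_apply]
    · change g.val = (g.val.submatrix π π).submatrix π.symm π.symm
      simp only [Matrix.submatrix_submatrix, Equiv.self_comp_symm, Matrix.submatrix_id_id]

lemma Tuple.coe_sort_eq_of_monotone_comp {n : ℕ} {α : Type*} [LinearOrder α] (f : Fin n → α)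
    (g : Fin n → Fin n) (hmono : Monotone (f ∘ g))
    (hfib : ∀ u v, u < v → f (g u) = f (g v) → g u < g v) : ⇑(Tuple.sort f) = g := by
  have hinj : Function.Injective g := fun u v huv => by
    by_contra hne
    rcases lt_or_gt_of_ne hne with h | h
    · exact (hfib u v h (congrArg f huv)).ne huv
    · exact (hfib v u h (congrArg f huv.symm)).ne huv.symm
  have h := (Tuple.eq_sort_iff (σ := Equiv.ofBijective g hinj.bijective_of_finite)).2 ⟨hmono, hfib⟩
  rw [← h]
  rfl

section Interleave


variable {K : ℕ} (aT bT : Fin K → ℕ)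

lemma blkPair_eq_blkIdxF : blkPair aT bT = blkIdxF (nExt (aT + bT)) K := by
  funext x
  simp only [blkPair, ← psum_add]
  rfl

lemma blkIdxF_add_eq {t x : ℕ} (ht : t < K) (h1 : psum aT t + psum bT t ≤ x)
    (h2 : x < psum aT (t + 1) + psum bT (t + 1)) : blkIdxF (nExt (aT + bT)) K x = t := by
  apply blkIdxF_eq_of_le_of_lt _ ht.le
  · change psum (aT + bT) t ≤ x
    rwa [psum_add]
  · change x < psum (aT + bT) (t + 1)
    rwa [psum_add]

lemma isBTab_eq_false {t x : ℕ} (ht : t < K) (h1 : psum aT t + psum bT t ≤ x)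
    (h2 : x < psum aT (t + 1) + psum bT t) : isBTab aT bT x = false := by
  have hb := psum_mono bT (Nat.le_add_right t 1)
  rw [isBTab, blkPair_eq_blkIdxF, blkIdxF_add_eq aT bT ht h1 (by omega)]
  exact decide_eq_false (by omega)

lemma isBTab_eq_true {t x : ℕ} (ht : t < K) (h1 : psum aT (t + 1) + psum bT t ≤ x)
    (h2 : x < psum aT (t + 1) + psum bT (t + 1)) : isBTab aT bT x = true := by
  have ha := psum_mono aT (Nat.le_add_right t 1)
  rw [isBTab, blkPair_eq_blkIdxF, blkIdxF_add_eq aT bT ht (by omega) h2]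
  exact decide_eq_true h1

/-- `σ_T⁻¹` on positions: the `m`-th index of `[0, a)`, in block `t` of `aT`, goes to the `A`-part
of block `t` of `aT + bT`, and the `m`-th index of `[a, a + b)` likewise to a `B`-part. -/
def interleave (m : ℕ) : ℕ :=
  if m < psum aT K then m + psum bT (blkIdxF (nExt aT) K m)
  else m - psum aT K + psum aT (blkIdxF (nExt bT) K (m - psum aT K) + 1)

lemma interleave_of_lt {m : ℕ} (hm : m < psum aT K) :
    blkIdxF (nExt aT) K m < K ∧
      psum aT (blkIdxF (nExt aT) K m) + psum bT (blkIdxF (nExt aT) K m) ≤ interleave aT bT m ∧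
      interleave aT bT m <
        psum aT (blkIdxF (nExt aT) K m + 1) + psum bT (blkIdxF (nExt aT) K m) := by
  obtain ⟨ht, h1, h2⟩ := blkIdxF_spec (nExt aT) hm
  rw [interleave, if_pos hm]
  exact ⟨ht, by change psum aT _ ≤ m at h1; omega, by change m < psum aT _ at h2; omega⟩

lemma interleave_add {m : ℕ} (hm : m < psum bT K) :
    blkIdxF (nExt bT) K m < K ∧
      psum aT (blkIdxF (nExt bT) K m + 1) + psum bT (blkIdxF (nExt bT) K m) ≤
        interleave aT bT (psum aT K + m) ∧
      interleave aT bT (psum aT K + m) <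
        psum aT (blkIdxF (nExt bT) K m + 1) + psum bT (blkIdxF (nExt bT) K m + 1) := by
  obtain ⟨ht, h1, h2⟩ := blkIdxF_spec (nExt bT) hm
  rw [interleave, if_neg (by omega), Nat.add_sub_cancel_left]
  exact ⟨ht, by change psum bT _ ≤ m at h1; omega, by change m < psum bT _ at h2; omega⟩

lemma blkIdxF_interleave_of_lt {m : ℕ} (hm : m < psum aT K) :
    blkIdxF (nExt (aT + bT)) K (interleave aT bT m) = blkIdxF (nExt aT) K m := by
  obtain ⟨ht, h1, h2⟩ := interleave_of_lt aT bT hm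
  have := psum_mono bT (Nat.le_add_right (blkIdxF (nExt aT) K m) 1)
  exact blkIdxF_add_eq aT bT ht h1 (by omega)

lemma blkIdxF_interleave_add {m : ℕ} (hm : m < psum bT K) :
    blkIdxF (nExt (aT + bT)) K (interleave aT bT (psum aT K + m)) = blkIdxF (nExt bT) K m := by
  obtain ⟨ht, h1, h2⟩ := interleave_add aT bT hm
  have := psum_mono aT (Nat.le_add_right (blkIdxF (nExt bT) K m) 1)
  exact blkIdxF_add_eq aT bT ht (by omega) h2

lemma interleave_lt {m : ℕ} (hm : m < psum aT K + psum bT K) :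
    interleave aT bT m < psum aT K + psum bT K := by
  rcases Nat.lt_or_ge m (psum aT K) with h | h
  · obtain ⟨ht, -, h2⟩ := interleave_of_lt aT bT h
    have := psum_mono aT (show _ + 1 ≤ K from ht)
    have := psum_mono bT ht.le
    omega
  · obtain ⟨m, rfl⟩ := Nat.exists_eq_add_of_le h
    obtain ⟨ht, -, h2⟩ := interleave_add aT bT (show m < psum bT K by omega)
    have := psum_mono aT (show _ + 1 ≤ K from ht)
    have := psum_mono bT (show _ + 1 ≤ K from ht)
    omega

lemma isBTab_interleave {m : ℕ} (hm : m < psum aT K + psum bT K) :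
    isBTab aT bT (interleave aT bT m) = decide (psum aT K ≤ m) := by
  rcases Nat.lt_or_ge m (psum aT K) with h | h
  · obtain ⟨ht, h1, h2⟩ := interleave_of_lt aT bT h
    rw [isBTab_eq_false aT bT ht h1 h2, decide_eq_false (by omega)]
  · obtain ⟨m, rfl⟩ := Nat.exists_eq_add_of_le h
    obtain ⟨ht, h1, h2⟩ := interleave_add aT bT (show m < psum bT K by omega)
    rw [isBTab_eq_true aT bT ht h1 h2, decide_eq_true h]

lemma interleave_lt_interleave {u v : ℕ} (huv : u < v)
    (hside : u < psum aT K ↔ v < psum aT K) : interleave aT bT u < interleave aT bT v := by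
  rcases Nat.lt_or_ge v (psum aT K) with hv' | hv'
  · have := psum_mono bT (blkIdxF_mono (nExt aT) K huv.le)
    rw [interleave, interleave, if_pos (hside.2 hv'), if_pos hv']
    omega
  · have hu' : psum aT K ≤ u := not_lt.1 (mt hside.1 (not_lt.2 hv'))
    have := psum_mono aT
      (Nat.add_le_add_right (blkIdxF_mono (nExt bT) K (Nat.sub_le_sub_right huv.le (psum aT K))) 1)
    rw [interleave, interleave, if_neg (not_lt.2 hu'), if_neg (not_lt.2 hv')]
    omega

lemma sigmaTab_inv_apply {N : ℕ} (hN : psum aT K + psum bT K = N) (x : Fin N) :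
    ((sigmaTab N aT bT)⁻¹ x : ℕ) = interleave aT bT x := by
  subst hN
  have hsort := Tuple.coe_sort_eq_of_monotone_comp (fun x : Fin _ => isBTab aT bT x)
    (fun x => ⟨interleave aT bT x, interleave_lt aT bT x.isLt⟩) ?_ ?_
  · rw [sigmaTab, inv_inv, hsort]
  · intro u v huv
    simp only [Function.comp_apply, isBTab_interleave aT bT u.isLt, isBTab_interleave aT bT v.isLt,
      Bool.le_iff_imp, decide_eq_true_eq]
    exact fun h => h.trans huv
  · intro u v huv hf
    simp only [isBTab_interleave aT bT u.isLt, isBTab_interleave aT bT v.isLt,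
      decide_eq_decide] at hf
    exact interleave_lt_interleave aT bT huv (by omega)

end Interleave

section Table

variable {a b k : ℕ} (aT bT : Fin (k + 1) → ℕ)

lemma blkIdxF_cSpTab_dPerm_sigmaTab_symm_iotaA (ha : psum aT (k + 1) = a)
    (hb : psum bT (k + 1) = b) (i : Fin (2 * a)) :
    blkIdxF (cSpTab (aT + bT)) (2 * k + 1)
        ((dPerm (a + b) (sigmaTab (a + b) aT bT)).symm (iotaA a b i)) =
      blkIdxF (cSpTab aT) (2 * k + 1) i := by
  have hab : psum (aT + bT) (k + 1) = a + b := by rw [psum_add, ha, hb]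
  rw [dPerm_symm]
  refine blkIdxF_cSpTab_map hab ha
    (fun j => dPerm (a + b) (sigmaTab (a + b) aT bT)⁻¹ (iotaA a b j))
    (fun j => by rw [iotaA_rev, dPerm_rev]) (fun j hj => by rwa [dPerm_lt_iff, iotaA_lt_iff])
    (fun j hj => ?_) i
  have hlt : (iotaA a b j : ℕ) < a + b := (iotaA_lt_iff a b j).2 hj
  rw [dPerm_val_of_lt _ _ hlt, sigmaTab_inv_apply aT bT (by rw [ha, hb])]
  simp only [iotaA_val, if_pos hj]
  exact blkIdxF_interleave_of_lt aT bT (ha ▸ hj)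

lemma blkIdxF_cSpTab_dPerm_sigmaTab_symm_iotaB (ha : psum aT (k + 1) = a)
    (hb : psum bT (k + 1) = b) (i : Fin (2 * b)) :
    blkIdxF (cSpTab (aT + bT)) (2 * k + 1)
        ((dPerm (a + b) (sigmaTab (a + b) aT bT)).symm (iotaB a b i)) =
      blkIdxF (cSpTab bT) (2 * k + 1) i := by
  have hab : psum (aT + bT) (k + 1) = a + b := by rw [psum_add, ha, hb]
  rw [dPerm_symm]
  refine blkIdxF_cSpTab_map hab hb
    (fun j => dPerm (a + b) (sigmaTab (a + b) aT bT)⁻¹ (iotaB a b j))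
    (fun j => by rw [iotaB_rev, dPerm_rev]) (fun j hj => by rwa [dPerm_lt_iff, iotaB_lt_iff])
    (fun j hj => ?_) i
  have hlt : (iotaB a b j : ℕ) < a + b := (iotaB_lt_iff a b j).2 hj
  rw [dPerm_val_of_lt _ _ hlt, sigmaTab_inv_apply aT bT (by rw [ha, hb]), iotaB_val, ← ha]
  exact blkIdxF_interleave_add aT bT (hb ▸ hj)

end Table

theorem stmt6 (a b k : ℕ) (n : Fin k → ℕ) (r : ℕ) (aT bT : Fin (k + 1) → ℕ)
    (hT : (∀ i, aT i + bT i = (Fin.snoc n r : Fin (k + 1) → ℕ) i) ∧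
      (∑ i, aT i = a) ∧ (∑ i, bT i = b)) :
    conjPerm F (dPerm (a + b) (sigmaTab (a + b) aT bT)) (PparSp F (a + b) n r) ∩ HSet F a b =
      { g | ∃ h1 : GL (Fin (2 * a)) F,
          h1 ∈ PparSp F a (fun i : Fin k => aT i.castSucc) (aT (Fin.last k)) ∧
          ∃ h2 : GL (Fin (2 * b)) F,
            h2 ∈ PparSp F b (fun i : Fin k => bT i.castSucc) (bT (Fin.last k)) ∧
            g.val = jEmbed F a b h1.val h2.val } ∧
    conjPerm F (dPerm (a + b) (sigmaTab (a + b) aT bT)) (MparSp F (a + b) n r) ∩ HSet F a b =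
      { g | ∃ h1 : GL (Fin (2 * a)) F,
          h1 ∈ MparSp F a (fun i : Fin k => aT i.castSucc) (aT (Fin.last k)) ∧
          ∃ h2 : GL (Fin (2 * b)) F,
            h2 ∈ MparSp F b (fun i : Fin k => bT i.castSucc) (bT (Fin.last k)) ∧
            g.val = jEmbed F a b h1.val h2.val } := by
  obtain ⟨hc, ha, hb⟩ := hT
  rw [← psum_total] at ha hb
  have hcSp : cSp n r = cSpTab (aT + bT) := by
    rw [show aT + bT = Fin.snoc n r from funext hc]
    simp [cSpTab]
  have hA := blkIdxF_cSpTab_dPerm_sigmaTab_symm_iotaA aT bT ha hb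
  have hB := blkIdxF_cSpTab_dPerm_sigmaTab_symm_iotaB aT bT ha hb
  rw [← hcSp] at hA hB
  exact ⟨conjPerm_dPerm_spZeroPattern_inter_HSet F _ (· < ·) hA hB,
    conjPerm_dPerm_spZeroPattern_inter_HSet F _ (· ≠ ·) hA hB⟩

end Stmt6
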